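/- Let α ∈ (1/3, 1), let x, y : [0,2] → ℝ be α-Hölder, let A be an α-Lévy area of order 0 associated with γ = (x, y), and let f : ℝ → ℝ be of class C². Then there exist I ∈ ℝ and C > 0 such that |I_ε^{[0,1]}(f) − I| ≤ C ε^{min(3α−1, α)} for all ε ∈ (0,1]; in particular the corrected symmetric integral ∫_0^1 f(y(u)) d^{A,1}x(u) exists, equals I, and is approximated at this rate. -/

import Mathlib

open MeasureTheory Filter Set

/-- `z` is `α`-Hölder on the interval `[a, b]`. -/
def HolderOnIcc (α a b : ℝ) (z : ℝ → ℝ) : Prop :=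
  ∃ L > 0, ∀ s ∈ Set.Icc a b, ∀ t ∈ Set.Icc a b, |z t - z s| ≤ L * |t - s| ^ α

/-- `A` is an `α`-Lévy area of order 0 associated with `γ = (x, y)` on `[0, 2]`. -/
def IsLevyArea0 (α : ℝ) (x y : ℝ → ℝ) (A : ℝ → ℝ → ℝ) : Prop :=
  (∀ r ∈ Set.Icc (0:ℝ) 2, ∀ s ∈ Set.Icc (0:ℝ) 2, ∀ t ∈ Set.Icc (0:ℝ) 2,
    A r s + A s t + A t r
      = -(1/2) * ((y t - y s) * (x r - x s) - (y r - y s) * (x t - x s)))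
  ∧ ∃ C > 0, ∀ s ∈ Set.Icc (0:ℝ) 2, ∀ t ∈ Set.Icc (0:ℝ) 2,
      |A s t| ≤ C * |t - s| ^ (2 * α)

/-- The `ε`-approximation `I_ε^{[a,b]}(f)` of the corrected symmetric integral. -/
noncomputable def Ieps (x y : ℝ → ℝ) (A : ℝ → ℝ → ℝ) (f : ℝ → ℝ) (a b ε : ℝ) : ℝ :=
  ε⁻¹ * (∫ u in a..b, ((f (y u) + f (y (u + ε))) / 2) * (x (u + ε) - x u))
    + ε⁻¹ * (∫ u in a..b, deriv f (y u) * A u (u + ε))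

/-!
The germ `Φ s t = (f (y s) + f (y t)) / 2 * (x t - x s) + f' (y s) * A s t` satisfies
`|Φ s t| ≲ |t - s| ^ α` and, by Chen's relation for `A` and a second-order Taylor expansion of `f`,
`|Φ s t - Φ s u - Φ u t| ≲ |t - s| ^ (3α)`. Hence `J η = ∫₀¹ Φ u (u + η) du` is almost additive:
`|J (δ + η) - J δ - J η| ≲ (δ + η) ^ (1 + θ)` with `θ = min (3α - 1) α`, while `Ieps … ε = J ε / ε`.
For such a `J`, `J η / η` converges along the dyadic scales `η = 2⁻ⁿ` at rate `η ^ θ`, and writing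
a general `η` as a dyadic scale plus a remainder of at most `η / 2` transfers the rate to all `η`.
-/

open Topology Function

lemma tendsto_nhdsWithin_zero_of_abs_le_rpow {g : ℝ → ℝ} {s : Set ℝ} {u M a : ℝ} (ha : 0 < a)
    (h : ∀ v ∈ s, |g v| ≤ M * |v - u| ^ a) : Tendsto g (𝓝[s] u) (𝓝 0) := by
  have hbound : Continuous fun v => M * |v - u| ^ a :=
    continuous_const.mul ((continuous_id.sub continuous_const).abs.rpow_const fun _ => Or.inr ha.le)
  have hlim : Tendsto (fun v => M * |v - u| ^ a) (𝓝[s] u) (𝓝 0) := by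
    simpa [Real.zero_rpow ha.ne'] using (hbound.tendsto u).mono_left nhdsWithin_le_nhds
  exact squeeze_zero_norm' (eventually_nhdsWithin_of_forall h) hlim

lemma tendsto_nhdsGT_zero_of_abs_le_rpow {g : ℝ → ℝ} {C a : ℝ} (ha : 0 < a)
    (h : ∀ ε ∈ Ioc (0 : ℝ) 1, |g ε| ≤ C * ε ^ a) : Tendsto g (𝓝[>] 0) (𝓝 0) := by
  rw [← nhdsWithin_Ioc_eq_nhdsGT zero_lt_one]
  refine tendsto_nhdsWithin_zero_of_abs_le_rpow (M := C) ha fun ε hε => ?_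
  rw [sub_zero, abs_of_pos hε.1]
  exact h ε hε

lemma abs_le_mul_rpow_of_mem_Icc {F : ℝ → ℝ → ℝ} {L α a b s t p q : ℝ} (hL : 0 ≤ L) (hα : 0 ≤ α)
    (hF : ∀ s ∈ Icc a b, ∀ t ∈ Icc a b, |F s t| ≤ L * |t - s| ^ α) (hst : Icc s t ⊆ Icc a b)
    (hp : p ∈ Icc s t) (hq : q ∈ Icc s t) : |F p q| ≤ L * (t - s) ^ α := by
  have hqp : |q - p| ≤ t - s :=
    abs_sub_le_iff.2 ⟨by linarith [hp.1, hq.2], by linarith [hp.2, hq.1]⟩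
  exact (hF p (hst hp) q (hst hq)).trans
    (mul_le_mul_of_nonneg_left (Real.rpow_le_rpow (abs_nonneg _) hqp hα) hL)

lemma ContinuousOn.comp_fst {α β γ : Type*} [TopologicalSpace α] [TopologicalSpace β]
    [TopologicalSpace γ] {g : α → γ} {s : Set α} {t : Set β} (hg : ContinuousOn g s) :
    ContinuousOn (fun p : α × β => g p.1) (s ×ˢ t) :=
  hg.comp continuousOn_fst fun _ hp => hp.1

lemma ContinuousOn.comp_snd {α β γ : Type*} [TopologicalSpace α] [TopologicalSpace β]
    [TopologicalSpace γ] {g : β → γ} {s : Set α} {t : Set β} (hg : ContinuousOn g t) :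
    ContinuousOn (fun p : α × β => g p.2) (s ×ˢ t) :=
  hg.comp continuousOn_snd fun _ hp => hp.2

def AlmostAdditive (J : ℝ → ℝ) (c p : ℝ) : Prop :=
  ∀ δ η : ℝ, 0 < δ → 0 < η → δ + η ≤ 1 → |J (δ + η) - J δ - J η| ≤ c * (δ + η) ^ p

lemma exists_pow_add_of_mem_Ioc {η : ℝ} (hη : η ∈ Ioc (0 : ℝ) 1) :
    ∃ n : ℕ, ∃ r ∈ Ioc 0 (η / 2), η = (1 / 2) ^ (n + 1) + r := by
  obtain ⟨n, h1, h2⟩ :=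
    exists_nat_pow_near_of_lt_one hη.1 hη.2 (by norm_num : (0 : ℝ) < 1 / 2) (by norm_num)
  rw [pow_succ] at h1
  refine ⟨n, η - (1 / 2) ^ (n + 1), ⟨?_, ?_⟩, by ring⟩ <;> rw [pow_succ] <;> linarith

namespace AlmostAdditive

variable {J : ℝ → ℝ} {c p : ℝ}

lemma nonneg (hJ : AlmostAdditive J c p) : 0 ≤ c := by
  have h := hJ (1 / 2) (1 / 2) (by norm_num) (by norm_num) (by norm_num)
  norm_num at h
  linarith [abs_nonneg (J 1 - J (1 / 2) - J (1 / 2))]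

lemma sub_const_mul (hJ : AlmostAdditive J c p) (I : ℝ) :
    AlmostAdditive (fun η => J η - I * η) c p := fun δ η hδ hη h => by
  convert hJ δ η hδ hη h using 2
  ring

/-- `J (2⁻ⁿ) / 2⁻ⁿ` is Cauchy: consecutive terms differ by at most `c (2⁻ⁿ) ^ (p - 1)`. -/
lemma exists_dyadic (hJ : AlmostAdditive J c p) (hp : 1 < p) :
    ∃ I C, 0 ≤ C ∧ ∀ n : ℕ, |J ((1 / 2) ^ n) - I * (1 / 2) ^ n| ≤ C * ((1 / 2) ^ n) ^ p := by
  set q : ℝ := (1 / 2) ^ (p - 1) with hq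
  have hq1 : q < 1 := Real.rpow_lt_one (by norm_num) (by norm_num) (by linarith)
  have hpow : ∀ n : ℕ, ((1 / 2 : ℝ) ^ n) ^ p = q ^ n * (1 / 2) ^ n := fun n => by
    rw [← Real.rpow_natCast_mul (by norm_num), mul_comm, Real.rpow_mul_natCast (by norm_num),
      ← mul_pow, hq, Real.rpow_sub_one (by norm_num)]
    field_simp
  set a : ℕ → ℝ := fun n => J ((1 / 2) ^ n) / (1 / 2) ^ n
  have hstep : ∀ n, dist (a n) (a (n + 1)) ≤ c * q ^ n := fun n => by
    have h := hJ ((1 / 2) ^ (n + 1)) ((1 / 2) ^ (n + 1)) (by positivity) (by positivity)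
      (by rw [← two_mul, pow_succ]
          linarith [pow_le_one₀ (n := n) (by norm_num : (0 : ℝ) ≤ 1 / 2) (by norm_num)])
    rw [← two_mul, show 2 * (1 / 2 : ℝ) ^ (n + 1) = (1 / 2) ^ n by ring, hpow] at h
    rw [Real.dist_eq, show a n - a (n + 1) = (J ((1 / 2) ^ n) - J ((1 / 2) ^ (n + 1))
      - J ((1 / 2) ^ (n + 1))) / (1 / 2) ^ n by simp only [a]; field_simp; ring,
      abs_div, abs_of_pos (by positivity : (0 : ℝ) < (1 / 2) ^ n), div_le_iff₀ (by positivity)]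
    linarith
  obtain ⟨I, hI⟩ := cauchySeq_tendsto_of_complete (cauchySeq_of_le_geometric q c hq1 hstep)
  refine ⟨I, c / (1 - q), div_nonneg hJ.nonneg (by linarith), fun n => ?_⟩
  have h := dist_le_of_le_geometric_of_tendsto q c hq1 hstep hI n
  rw [Real.dist_eq] at h
  calc |J ((1 / 2) ^ n) - I * (1 / 2) ^ n| = |a n - I| * (1 / 2) ^ n := by
        rw [show J ((1 / 2) ^ n) - I * (1 / 2) ^ n = (a n - I) * (1 / 2) ^ n by
          simp only [a]; field_simp, abs_mul, abs_of_pos (by positivity : (0 : ℝ) < (1 / 2) ^ n)]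
    _ ≤ c * q ^ n / (1 - q) * (1 / 2) ^ n := by gcongr
    _ = c / (1 - q) * ((1 / 2) ^ n) ^ p := by rw [hpow]; ring

/-- Splitting `η = 2⁻ⁿ⁻¹ + r` with `r ≤ η / 2` and recursing `k` times on the remainder. -/
lemma exists_abs_le_add_abs (hJ : AlmostAdditive J c p) (hp : 1 ≤ p) {C : ℝ}
    (hdy : ∀ n : ℕ, |J ((1 / 2) ^ n)| ≤ C * ((1 / 2) ^ n) ^ p) (k : ℕ) :
    ∀ η ∈ Ioc (0 : ℝ) 1, ∃ ρ ∈ Ioc 0 ((1 / 2) ^ k * η), |J η| ≤ 2 * (C + c) * η ^ p + |J ρ| := by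
  have hc := hJ.nonneg
  have hC : 0 ≤ C := by simpa using (abs_nonneg _).trans (hdy 0)
  induction k with
  | zero =>
    intro η hη
    exact ⟨η, ⟨hη.1, by simp⟩, le_add_of_nonneg_left (by have := hη.1; positivity)⟩
  | succ k ih =>
    intro η hη
    obtain ⟨n, r, hr, rfl⟩ := exists_pow_add_of_mem_Ioc hη
    set d : ℝ := (1 / 2) ^ (n + 1)
    have hd : 0 < d := by positivity
    obtain ⟨ρ, hρ, hJr⟩ := ih r ⟨hr.1, by linarith [hr.2, hη.2]⟩
    refine ⟨ρ, ⟨hρ.1, hρ.2.trans ?_⟩, ?_⟩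
    · rw [pow_succ, mul_assoc]
      gcongr
      linarith [hr.2]
    have hdp : d ^ p ≤ (d + r) ^ p := by gcongr; linarith [hr.1]
    have hrp : r ^ p ≤ (d + r) ^ p / 2 :=
      calc r ^ p ≤ ((d + r) / 2) ^ p := by gcongr; exacts [hr.1.le, hr.2]
        _ = (d + r) ^ p / 2 ^ p := Real.div_rpow (by linarith [hr.1]) (by norm_num) p
        _ ≤ (d + r) ^ p / 2 :=
          div_le_div_of_nonneg_left (Real.rpow_nonneg (by linarith [hr.1]) p) (by norm_num)
            (by simpa using Real.rpow_le_rpow_of_exponent_le (by norm_num : (1 : ℝ) ≤ 2) hp)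
    calc |J (d + r)| = |(J (d + r) - J d - J r) + J d + J r| := by congr 1; ring
      _ ≤ |J (d + r) - J d - J r| + |J d| + |J r| := abs_add_three _ _ _
      _ ≤ c * (d + r) ^ p + C * (d + r) ^ p + (2 * (C + c) * ((d + r) ^ p / 2) + |J ρ|) := by
          gcongr
          · exact hJ d r hd hr.1 hη.2
          · exact (hdy (n + 1)).trans (by gcongr)
          · exact hJr.trans (by gcongr)
      _ = 2 * (C + c) * (d + r) ^ p + |J ρ| := by ring

lemma abs_le_of_dyadic (hJ : AlmostAdditive J c p) (hp : 1 ≤ p) {C : ℝ}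
    (hdy : ∀ n : ℕ, |J ((1 / 2) ^ n)| ≤ C * ((1 / 2) ^ n) ^ p) (h0 : Tendsto J (𝓝[>] 0) (𝓝 0))
    {η : ℝ} (hη : η ∈ Ioc (0 : ℝ) 1) : |J η| ≤ 2 * (C + c) * η ^ p := by
  choose ρ hρ hJρ using fun k => hJ.exists_abs_le_add_abs hp hdy k η hη
  have hρ0 : Tendsto ρ atTop (𝓝[>] 0) := by
    refine tendsto_nhdsWithin_iff.2 ⟨squeeze_zero (fun k => (hρ k).1.le) (fun k => (hρ k).2) ?_,
      Eventually.of_forall fun k => (hρ k).1⟩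
    simpa using (tendsto_pow_atTop_nhds_zero_of_lt_one (by norm_num : (0 : ℝ) ≤ 1 / 2)
      (by norm_num)).mul_const η
  simpa using ge_of_tendsto (tendsto_const_nhds.add (h0.comp hρ0).abs) (Eventually.of_forall hJρ)

theorem exists_abs_sub_mul_le (hJ : AlmostAdditive J c p) (hp : 1 < p)
    (h0 : Tendsto J (𝓝[>] 0) (𝓝 0)) :
    ∃ I C, 0 < C ∧ ∀ η ∈ Ioc (0 : ℝ) 1, |J η - I * η| ≤ C * η ^ p := by
  obtain ⟨I, C, hC, hdy⟩ := hJ.exists_dyadic hp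
  have hE0 : Tendsto (fun η => J η - I * η) (𝓝[>] 0) (𝓝 0) := by
    simpa using h0.sub (((continuous_const_mul I).tendsto 0).mono_left nhdsWithin_le_nhds)
  have hc := hJ.nonneg
  refine ⟨I, 2 * (C + c) + 1, by positivity, fun η hη => ?_⟩
  refine ((hJ.sub_const_mul I).abs_le_of_dyadic hp.le hdy hE0 hη).trans ?_
  have := hη.1
  gcongr
  linarith

theorem exists_abs_inv_mul_sub_le {θ : ℝ} (hJ : AlmostAdditive J c (1 + θ)) (hθ : 0 < θ)
    (h0 : Tendsto J (𝓝[>] 0) (𝓝 0)) :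
    ∃ I C, 0 < C ∧ ∀ η ∈ Ioc (0 : ℝ) 1, |η⁻¹ * J η - I| ≤ C * η ^ θ := by
  obtain ⟨I, C, hC, h⟩ := hJ.exists_abs_sub_mul_le (by linarith) h0
  refine ⟨I, C, hC, fun η hη => ?_⟩
  have hη0 := hη.1
  calc |η⁻¹ * J η - I| = η⁻¹ * |J η - I * η| := by
        rw [show η⁻¹ * J η - I = η⁻¹ * (J η - I * η) by field_simp, abs_mul,
          abs_of_pos (inv_pos.2 hη0)]
    _ ≤ η⁻¹ * (C * η ^ (1 + θ)) := by gcongr; exact h η hη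
    _ = C * η ^ θ := by rw [Real.rpow_add hη0, Real.rpow_one]; field_simp

end AlmostAdditive

section Sewing

variable {Φ : ℝ → ℝ → ℝ}

lemma intervalIntegrable_shift (hΦ : ContinuousOn (uncurry Φ) (Icc 0 2 ×ˢ Icc 0 2)) {a b η : ℝ}
    (ha : 0 ≤ a) (hab : a ≤ b) (hη : 0 ≤ η) (hb : b + η ≤ 2) :
    IntervalIntegrable (fun u => Φ u (u + η)) volume a b :=
  ContinuousOn.intervalIntegrable_of_Icc hab <| hΦ.comp (f := fun u => (u, u + η)) (by fun_prop)
    fun u hu => ⟨⟨by linarith [hu.1], by linarith [hu.2]⟩, ⟨by linarith [hu.1], by linarith [hu.2]⟩⟩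

lemma integral_shift_add_sub (hΦ : ContinuousOn (uncurry Φ) (Icc 0 2 ×ˢ Icc 0 2)) {δ η : ℝ}
    (hδ : 0 ≤ δ) (hη : 0 ≤ η) (h : δ + η ≤ 1) :
    (∫ u in (0 : ℝ)..1, Φ u (u + (δ + η))) - (∫ u in (0 : ℝ)..1, Φ u (u + δ))
        - ∫ u in (0 : ℝ)..1, Φ u (u + η) =
      (∫ u in (0 : ℝ)..1, (Φ u (u + (δ + η)) - Φ u (u + δ) - Φ (u + δ) (u + δ + η)))
        + ((∫ u in (1 : ℝ)..1 + δ, Φ u (u + η)) - ∫ u in (0 : ℝ)..δ, Φ u (u + η)) := by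
  have hint_shift : IntervalIntegrable (fun u => Φ (u + δ) (u + δ + η)) volume 0 1 := by
    simpa using (intervalIntegrable_shift hΦ (a := δ) (b := 1 + δ) hδ (by linarith) hη
      (by linarith)).comp_add_right δ
  have hshift : ∫ u in (0 : ℝ)..1, Φ (u + δ) (u + δ + η) = ∫ u in δ..1 + δ, Φ u (u + η) := by
    simpa [add_comm] using
      intervalIntegral.integral_comp_add_right (a := 0) (b := 1) (fun u => Φ u (u + η)) δ
  have hint_sum := intervalIntegrable_shift hΦ (a := 0) (b := 1) le_rfl zero_le_one
    (by linarith : 0 ≤ δ + η) (by linarith)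
  have hint_δ := intervalIntegrable_shift hΦ (a := 0) (b := 1) le_rfl zero_le_one hδ (by linarith)
  rw [intervalIntegral.integral_sub (hint_sum.sub hint_δ) hint_shift,
    intervalIntegral.integral_sub hint_sum hint_δ, hshift]
  have := intervalIntegral.integral_interval_sub_interval_comm
    (intervalIntegrable_shift hΦ (a := 0) (b := 1) le_rfl zero_le_one hη (by linarith))
    (intervalIntegrable_shift hΦ (a := δ) (b := 1 + δ) hδ (by linarith) hη (by linarith))
    (intervalIntegrable_shift hΦ (a := 0) (b := δ) le_rfl hδ hη (by linarith))
  linarith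

lemma abs_integral_shift_le {K a : ℝ}
    (hΦ : ∀ s t, 0 ≤ s → s ≤ t → t ≤ 2 → t - s ≤ 1 → |Φ s t| ≤ K * (t - s) ^ a)
    {lo hi η : ℝ} (hlo : 0 ≤ lo) (hhi : lo ≤ hi) (hη : 0 ≤ η) (hη1 : η ≤ 1) (h2 : hi + η ≤ 2) :
    |∫ u in lo..hi, Φ u (u + η)| ≤ K * η ^ a * (hi - lo) := by
  have h := intervalIntegral.norm_integral_le_of_norm_le_const (C := K * η ^ a)
    (f := fun u => Φ u (u + η)) (a := lo) (b := hi) fun u hu => by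
      rw [uIoc_of_le hhi] at hu
      simpa using hΦ u (u + η) (by linarith [hu.1]) (by linarith) (by linarith [hu.2]) (by simpa)
  rwa [Real.norm_eq_abs, abs_of_nonneg (sub_nonneg.2 hhi)] at h

theorem almostAdditive_integral_shift {K K' p a q : ℝ}
    (hΦc : ContinuousOn (uncurry Φ) (Icc 0 2 ×ˢ Icc 0 2))
    (hΦ : ∀ s t, 0 ≤ s → s ≤ t → t ≤ 2 → t - s ≤ 1 → |Φ s t| ≤ K' * (t - s) ^ a)
    (hδΦ : ∀ s u t, 0 ≤ s → s ≤ u → u ≤ t → t ≤ 2 → |Φ s t - Φ s u - Φ u t| ≤ K * (t - s) ^ p)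
    (hK : 0 ≤ K) (hK' : 0 ≤ K') (ha : 0 ≤ a) (hqp : q ≤ p) (hqa : q ≤ 1 + a) :
    AlmostAdditive (fun η => ∫ u in (0 : ℝ)..1, Φ u (u + η)) (K + 2 * K') q := by
  intro δ η hδ hη h
  have hsum : 0 < δ + η := by linarith
  beta_reduce
  rw [integral_shift_add_sub hΦc hδ.le hη.le h]
  have h1 : |∫ u in (0 : ℝ)..1, (Φ u (u + (δ + η)) - Φ u (u + δ) - Φ (u + δ) (u + δ + η))|
      ≤ K * (δ + η) ^ p := by
    have := intervalIntegral.norm_integral_le_of_norm_le_const (C := K * (δ + η) ^ p)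
      (f := fun u => Φ u (u + (δ + η)) - Φ u (u + δ) - Φ (u + δ) (u + δ + η)) (a := 0) (b := 1)
      fun u hu => by
        rw [uIoc_of_le zero_le_one] at hu
        have := hδΦ u (u + δ) (u + (δ + η)) hu.1.le (by linarith) (by linarith) (by linarith [hu.2])
        simpa only [Real.norm_eq_abs, add_sub_cancel_left, add_assoc] using this
    simpa using this
  have h2 := abs_integral_shift_le hΦ (lo := 1) (hi := 1 + δ) zero_le_one (by linarith) hη.le
    (by linarith) (by linarith)
  have h3 := abs_integral_shift_le hΦ (lo := 0) (hi := δ) le_rfl hδ.le hη.le (by linarith)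
    (by linarith)
  have hp : (δ + η) ^ p ≤ (δ + η) ^ q := Real.rpow_le_rpow_of_exponent_ge hsum h hqp
  have hδη : δ * η ^ a ≤ (δ + η) ^ q :=
    calc δ * η ^ a ≤ (δ + η) * (δ + η) ^ a := by gcongr <;> linarith
      _ = (δ + η) ^ (1 + a) := by rw [Real.rpow_add hsum, Real.rpow_one]
      _ ≤ (δ + η) ^ q := Real.rpow_le_rpow_of_exponent_ge hsum h hqa
  calc _ ≤ |∫ u in (0 : ℝ)..1, (Φ u (u + (δ + η)) - Φ u (u + δ) - Φ (u + δ) (u + δ + η))|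
        + (|∫ u in (1 : ℝ)..1 + δ, Φ u (u + η)| + |∫ u in (0 : ℝ)..δ, Φ u (u + η)|) :=
        (abs_add_le _ _).trans (add_le_add le_rfl (abs_sub _ _))
    _ ≤ K * (δ + η) ^ p + (K' * η ^ a * (1 + δ - 1) + K' * η ^ a * (δ - 0)) := by gcongr
    _ ≤ (K + 2 * K') * (δ + η) ^ q := by
        have := mul_le_mul_of_nonneg_left hp hK
        have := mul_le_mul_of_nonneg_left hδη hK'
        linarith

end Sewing

lemma HolderOnIcc.continuousOn {α a b : ℝ} {z : ℝ → ℝ} (hz : HolderOnIcc α a b z) (hα : 0 < α) :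
    ContinuousOn z (Icc a b) := by
  obtain ⟨L, -, hL⟩ := hz
  exact fun u hu => tendsto_sub_nhds_zero_iff.mp
    (tendsto_nhdsWithin_zero_of_abs_le_rpow hα fun v hv => hL u hu v hv)

namespace IsLevyArea0

variable {α : ℝ} {x y : ℝ → ℝ} {A : ℝ → ℝ → ℝ}

lemma apply_self (hA : IsLevyArea0 α x y A) {s : ℝ} (hs : s ∈ Icc (0 : ℝ) 2) : A s s = 0 := by
  have h := hA.1 s hs s hs s hs
  ring_nf at h
  linarith

lemma apply_swap (hA : IsLevyArea0 α x y A) {s t : ℝ} (hs : s ∈ Icc (0 : ℝ) 2)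
    (ht : t ∈ Icc (0 : ℝ) 2) : A t s = -A s t := by
  have h := hA.1 t ht s hs s hs
  rw [hA.apply_self hs] at h
  ring_nf at h
  linarith

lemma chen (hA : IsLevyArea0 α x y A) {s u t : ℝ} (hs : s ∈ Icc (0 : ℝ) 2)
    (hu : u ∈ Icc (0 : ℝ) 2) (ht : t ∈ Icc (0 : ℝ) 2) :
    A s t = A s u + A u t + 1 / 2 * ((y t - y u) * (x s - x u) - (y s - y u) * (x t - x u)) := by
  have h := hA.1 s hs u hu t ht
  rw [hA.apply_swap hs ht] at h
  linarith

lemma continuousOn_uncurry (hA : IsLevyArea0 α x y A) (hα : 0 < α)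
    (hx : ContinuousOn x (Icc 0 2)) (hy : ContinuousOn y (Icc 0 2)) :
    ContinuousOn (uncurry A) (Icc 0 2 ×ˢ Icc 0 2) := by
  have h0 : (0 : ℝ) ∈ Icc (0 : ℝ) 2 := by norm_num
  obtain ⟨C, -, hC⟩ := hA.2
  have hA0 : ContinuousOn (A 0) (Icc 0 2) := by
    intro u hu
    have hAu : ContinuousWithinAt (A u) (Icc 0 2) u := by
      rw [ContinuousWithinAt, hA.apply_self hu]
      exact tendsto_nhdsWithin_zero_of_abs_le_rpow (by positivity) (hC u hu)
    have hrhs : ContinuousWithinAt (fun v => A 0 u + A u v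
        + 1 / 2 * ((y v - y u) * (x 0 - x u) - (y 0 - y u) * (x v - x u))) (Icc 0 2) u :=
      (continuousWithinAt_const.add hAu).add (continuousWithinAt_const.mul
        ((((hy u hu).sub continuousWithinAt_const).mul continuousWithinAt_const).sub
          (continuousWithinAt_const.mul ((hx u hu).sub continuousWithinAt_const))))
    exact hrhs.congr (fun v hv => hA.chen h0 hu hv) (hA.chen h0 hu hu)
  have hrhs : ContinuousOn (fun p : ℝ × ℝ => A 0 p.2 - A 0 p.1
      + 1 / 2 * ((y p.2 - y 0) * (x p.1 - x 0) - (y p.1 - y 0) * (x p.2 - x 0)))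
      (Icc 0 2 ×ˢ Icc 0 2) :=
    (hA0.comp_snd.sub hA0.comp_fst).add (continuousOn_const.mul
      (((hy.comp_snd.sub continuousOn_const).mul (hx.comp_fst.sub continuousOn_const)).sub
        ((hy.comp_fst.sub continuousOn_const).mul (hx.comp_snd.sub continuousOn_const))))
  refine hrhs.congr fun p hp => ?_
  show A p.1 p.2 = _
  rw [hA.chen hp.1 h0 hp.2, hA.apply_swap h0 hp.1]
  ring

end IsLevyArea0

lemma ContDiff.exists_taylor_bound {f : ℝ → ℝ} (hf : ContDiff ℝ 2 f) {s : Set ℝ}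
    (hs : IsCompact s) (hsc : Convex ℝ s) :
    ∃ M, 0 ≤ M ∧ ∀ a ∈ s, ∀ b ∈ s, ∀ c ∈ s,
      |deriv f b - deriv f a| ≤ M * |b - a| ∧
      |f c - f b - deriv f a * (c - b)| ≤ M * |c - b| * (|c - b| + |b - a|) := by
  have hf1 : ContDiff ℝ 1 (deriv f) := hf.deriv' (n := 1)
  have hdf := hf.differentiable (by norm_num)
  obtain ⟨M, hM⟩ := hs.exists_bound_of_continuousOn (hf1.continuous_deriv le_rfl).continuousOn
  have hlip : ∀ a ∈ s, ∀ b ∈ s, |deriv f b - deriv f a| ≤ max M 0 * |b - a| := fun a ha b hb => by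
    simpa only [Real.norm_eq_abs] using hsc.norm_image_sub_le_of_norm_deriv_le
      (fun z _ => (hf1.differentiable (by norm_num)).differentiableAt)
      (fun z hz => (hM z hz).trans (le_max_left _ _)) ha hb
  refine ⟨max M 0, le_max_right _ _, fun a ha b hb c hc => ⟨hlip a ha b hb, ?_⟩⟩
  have hderiv : ∀ z, HasDerivAt (fun z => f z - deriv f a * z) (deriv f z - deriv f a) z :=
    fun z =>
    ((hdf z).hasDerivAt.sub ((hasDerivAt_id' z).const_mul (deriv f a))).congr_deriv (by ring)
  have hbc : uIcc b c ⊆ s := by rw [← segment_eq_uIcc]; exact hsc.segment_subset hb hc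
  have hmv := (convex_uIcc b c).norm_image_sub_le_of_norm_deriv_le
    (fun z _ => (hderiv z).differentiableAt) (C := max M 0 * (|c - b| + |b - a|))
    (fun z hz => by
      rw [(hderiv z).deriv, Real.norm_eq_abs]
      calc |deriv f z - deriv f a| ≤ max M 0 * |z - a| := hlip a ha z (hbc hz)
        _ ≤ max M 0 * (|c - b| + |b - a|) := by
          gcongr
          calc |z - a| = |(z - b) + (b - a)| := by ring_nf
            _ ≤ |z - b| + |b - a| := abs_add_le _ _
            _ ≤ |c - b| + |b - a| := add_le_add_left (abs_sub_left_of_mem_uIcc hz) _)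
    left_mem_uIcc right_mem_uIcc
  rw [Real.norm_eq_abs, Real.norm_eq_abs] at hmv
  calc |f c - f b - deriv f a * (c - b)| = |f c - deriv f a * c - (f b - deriv f a * b)| := by
        ring_nf
    _ ≤ _ := hmv
    _ = _ := by ring

noncomputable def symGerm (x y : ℝ → ℝ) (A : ℝ → ℝ → ℝ) (f : ℝ → ℝ) (s t : ℝ) : ℝ :=
  (f (y s) + f (y t)) / 2 * (x t - x s) + deriv f (y s) * A s t

section Germ

variable {α : ℝ} {x y : ℝ → ℝ} {A : ℝ → ℝ → ℝ} {f : ℝ → ℝ}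

lemma continuousOn_symGerm_summands (hx : ContinuousOn x (Icc 0 2)) (hy : ContinuousOn y (Icc 0 2))
    (hA : ContinuousOn (uncurry A) (Icc 0 2 ×ˢ Icc 0 2)) (hf : ContDiff ℝ 1 f) :
    ContinuousOn (uncurry fun s t => (f (y s) + f (y t)) / 2 * (x t - x s)) (Icc 0 2 ×ˢ Icc 0 2) ∧
    ContinuousOn (uncurry fun s t => deriv f (y s) * A s t) (Icc 0 2 ×ˢ Icc 0 2) := by
  have hfy := hf.continuous.comp_continuousOn hy
  have hf'y := (hf.continuous_deriv le_rfl).comp_continuousOn hy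
  exact ⟨((hfy.comp_fst.add hfy.comp_snd).div_const 2).mul (hx.comp_snd.sub hx.comp_fst),
    hf'y.comp_fst.mul hA⟩

lemma continuousOn_symGerm (hx : ContinuousOn x (Icc 0 2)) (hy : ContinuousOn y (Icc 0 2))
    (hA : ContinuousOn (uncurry A) (Icc 0 2 ×ˢ Icc 0 2)) (hf : ContDiff ℝ 1 f) :
    ContinuousOn (uncurry (symGerm x y A f)) (Icc 0 2 ×ˢ Icc 0 2) := by
  obtain ⟨h₁, h₂⟩ := continuousOn_symGerm_summands hx hy hA hf
  exact h₁.add h₂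

lemma IsLevyArea0.symGerm_sub_sub (hA : IsLevyArea0 α x y A) {s u t : ℝ}
    (hs : s ∈ Icc (0 : ℝ) 2) (hu : u ∈ Icc (0 : ℝ) 2) (ht : t ∈ Icc (0 : ℝ) 2) :
    symGerm x y A f s t - symGerm x y A f s u - symGerm x y A f u t =
      1 / 2 * (x u - x s) * (f (y t) - f (y u) - deriv f (y s) * (y t - y u))
      - 1 / 2 * (x t - x u) * (f (y u) - f (y s) - deriv f (y s) * (y u - y s))
      + (deriv f (y s) - deriv f (y u)) * A u t := by
  simp only [symGerm]
  rw [hA.chen hs hu ht]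
  ring

lemma exists_abs_increment_le (hα : 0 ≤ α) (hx : HolderOnIcc α 0 2 x) (hy : HolderOnIcc α 0 2 y)
    (hA : IsLevyArea0 α x y A) :
    ∃ L, 0 ≤ L ∧ ∀ s t, 0 ≤ s → t ≤ 2 → ∀ p ∈ Icc s t, ∀ q ∈ Icc s t,
      |x q - x p| ≤ L * (t - s) ^ α ∧ |y q - y p| ≤ L * (t - s) ^ α ∧
      |A p q| ≤ L * ((t - s) ^ α) ^ 2 := by
  obtain ⟨Lx, hLx, hxL⟩ := hx
  obtain ⟨Ly, hLy, hyL⟩ := hy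
  obtain ⟨C, hC, hAC⟩ := hA.2
  refine ⟨Lx + Ly + C, by positivity, fun s t h0s ht2 p hp q hq => ?_⟩
  have hsub : Icc s t ⊆ Icc (0 : ℝ) 2 := Icc_subset_Icc h0s ht2
  have hst : 0 ≤ t - s := by linarith [hp.1, hp.2]
  set T := (t - s) ^ α with hT
  have hT0 : 0 ≤ T := Real.rpow_nonneg hst α
  have hA' := abs_le_mul_rpow_of_mem_Icc hC.le (by positivity) hAC hsub hp hq
  rw [show (2 : ℝ) * α = α * (2 : ℕ) by push_cast; ring, Real.rpow_mul_natCast hst, ← hT] at hA'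
  refine ⟨?_, ?_, hA'.trans (by gcongr; linarith)⟩
  · exact (abs_le_mul_rpow_of_mem_Icc (F := fun p q => x q - x p) hLx.le hα hxL hsub hp hq).trans
      (by gcongr; linarith)
  · exact (abs_le_mul_rpow_of_mem_Icc (F := fun p q => y q - y p) hLy.le hα hyL hsub hp hq).trans
      (by gcongr; linarith)

lemma exists_abs_symGerm_le (hα : 0 < α) (hx : HolderOnIcc α 0 2 x) (hy : HolderOnIcc α 0 2 y)
    (hA : IsLevyArea0 α x y A) (hf : ContDiff ℝ 1 f) :
    ∃ K, 0 ≤ K ∧ ∀ s t, 0 ≤ s → s ≤ t → t ≤ 2 → t - s ≤ 1 →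
      |symGerm x y A f s t| ≤ K * (t - s) ^ α := by
  obtain ⟨L, hL, hinc⟩ := exists_abs_increment_le hα.le hx hy hA
  obtain ⟨M₀, hM₀⟩ := isCompact_Icc.exists_bound_of_continuousOn
    (hf.continuous.comp_continuousOn (hy.continuousOn hα))
  obtain ⟨M₁, hM₁⟩ := isCompact_Icc.exists_bound_of_continuousOn
    ((hf.continuous_deriv le_rfl).comp_continuousOn (hy.continuousOn hα))
  have h0 : (0 : ℝ) ∈ Icc (0 : ℝ) 2 := by norm_num
  have hM₀0 : 0 ≤ M₀ := (norm_nonneg _).trans (hM₀ 0 h0)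
  have hM₁0 : 0 ≤ M₁ := (norm_nonneg _).trans (hM₁ 0 h0)
  refine ⟨(M₀ + M₁) * L, by positivity, fun s t h0s hst ht2 hts => ?_⟩
  have hs : s ∈ Icc (0 : ℝ) 2 := ⟨h0s, by linarith⟩
  have ht : t ∈ Icc (0 : ℝ) 2 := ⟨by linarith, ht2⟩
  set T := (t - s) ^ α
  have hT0 : 0 ≤ T := Real.rpow_nonneg (sub_nonneg.2 hst) α
  have hT1 : T ≤ 1 := Real.rpow_le_one (sub_nonneg.2 hst) hts hα.le
  obtain ⟨hx', -, hA'⟩ := hinc s t h0s ht2 s ⟨le_rfl, hst⟩ t ⟨hst, le_rfl⟩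
  have hF : |(f (y s) + f (y t)) / 2| ≤ M₀ := by
    have h1 : |f (y s)| ≤ M₀ := hM₀ s hs
    have h2 : |f (y t)| ≤ M₀ := hM₀ t ht
    rw [abs_div, abs_two]
    linarith [abs_add_le (f (y s)) (f (y t))]
  calc |symGerm x y A f s t|
      ≤ |(f (y s) + f (y t)) / 2| * |x t - x s| + |deriv f (y s)| * |A s t| := by
        rw [symGerm, ← abs_mul, ← abs_mul]; exact abs_add_le _ _
    _ ≤ M₀ * (L * T) + M₁ * (L * T) := by
        gcongr
        · exact hM₁ s hs
        · exact hA'.trans (by gcongr; exact pow_le_of_le_one hT0 hT1 two_ne_zero)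
    _ = (M₀ + M₁) * L * T := by ring

lemma Ieps_eq_inv_mul_integral_symGerm (hx : ContinuousOn x (Icc 0 2))
    (hy : ContinuousOn y (Icc 0 2)) (hA : ContinuousOn (uncurry A) (Icc 0 2 ×ˢ Icc 0 2))
    (hf : ContDiff ℝ 1 f) {ε : ℝ} (hε : ε ∈ Ioc (0 : ℝ) 1) :
    Ieps x y A f 0 1 ε = ε⁻¹ * ∫ u in (0 : ℝ)..1, symGerm x y A f u (u + ε) := by
  obtain ⟨h₁, h₂⟩ := continuousOn_symGerm_summands hx hy hA hf
  rw [Ieps, ← mul_add, ← intervalIntegral.integral_add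
    (intervalIntegrable_shift h₁ le_rfl zero_le_one hε.1.le (by linarith [hε.2]))
    (intervalIntegrable_shift h₂ le_rfl zero_le_one hε.1.le (by linarith [hε.2]))]
  rfl

lemma exists_abs_symGerm_sub_sub_le (hα : 0 < α) (hx : HolderOnIcc α 0 2 x)
    (hy : HolderOnIcc α 0 2 y) (hA : IsLevyArea0 α x y A) (hf : ContDiff ℝ 2 f) :
    ∃ K, 0 ≤ K ∧ ∀ s u t, 0 ≤ s → s ≤ u → u ≤ t → t ≤ 2 →
      |symGerm x y A f s t - symGerm x y A f s u - symGerm x y A f u t|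
        ≤ K * (t - s) ^ (3 * α) := by
  obtain ⟨L, hL, hinc⟩ := exists_abs_increment_le hα.le hx hy hA
  obtain ⟨R, hR⟩ := isCompact_Icc.exists_bound_of_continuousOn (hy.continuousOn hα)
  have hyR : ∀ u ∈ Icc (0 : ℝ) 2, y u ∈ Icc (-R) R := fun u hu =>
    abs_le.1 (by simpa only [Real.norm_eq_abs] using hR u hu)
  obtain ⟨M, hM, hfM⟩ := hf.exists_taylor_bound isCompact_Icc (convex_Icc (-R) R)
  refine ⟨3 / 2 * M * L ^ 3 + M * L ^ 2, by positivity, fun s u t h0s hsu hut ht2 => ?_⟩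
  have hsub : Icc s t ⊆ Icc (0 : ℝ) 2 := Icc_subset_Icc h0s ht2
  have hs : s ∈ Icc s t := ⟨le_rfl, hsu.trans hut⟩
  have hu : u ∈ Icc s t := ⟨hsu, hut⟩
  have ht : t ∈ Icc s t := ⟨hsu.trans hut, le_rfl⟩
  set T := (t - s) ^ α
  have hT : 0 ≤ T := Real.rpow_nonneg (sub_nonneg.2 (hsu.trans hut)) α
  have hinc' := hinc s t h0s ht2
  have hT3 : (t - s) ^ (3 * α) = T ^ 3 := by
    rw [show (3 : ℝ) * α = α * (3 : ℕ) by push_cast; ring,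
      Real.rpow_mul_natCast (sub_nonneg.2 (hsu.trans hut))]
  have hfM' := fun a ha b hb c hc =>
    hfM (y a) (hyR a (hsub ha)) (y b) (hyR b (hsub hb)) (y c) (hyR c (hsub hc))
  have hP : |f (y t) - f (y u) - deriv f (y s) * (y t - y u)| ≤ M * (L * T) * (L * T + L * T) :=
    (hfM' s hs u hu t ht).2.trans (by gcongr <;> exact (hinc' _ ‹_› _ ‹_›).2.1)
  have hQ : |f (y u) - f (y s) - deriv f (y s) * (y u - y s)| ≤ M * (L * T) * (L * T + 0) :=
    (hfM' s hs s hs u hu).2.trans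
      (by rw [sub_self, abs_zero]; gcongr <;> exact (hinc' s hs u hu).2.1)
  have hD : |deriv f (y s) - deriv f (y u)| ≤ M * (L * T) := by
    rw [abs_sub_comm]
    exact (hfM' s hs u hu u hu).1.trans (by gcongr; exact (hinc' s hs u hu).2.1)
  rw [hA.symGerm_sub_sub (hsub hs) (hsub hu) (hsub ht), hT3]
  calc _ ≤ 1 / 2 * |x u - x s| * |f (y t) - f (y u) - deriv f (y s) * (y t - y u)|
        + 1 / 2 * |x t - x u| * |f (y u) - f (y s) - deriv f (y s) * (y u - y s)|
        + |deriv f (y s) - deriv f (y u)| * |A u t| := by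
        refine (abs_add_le _ _).trans (add_le_add ((abs_sub _ _).trans_eq ?_) (abs_mul _ _).le)
        rw [abs_mul, abs_mul, abs_mul, abs_mul, abs_of_pos (by norm_num : (0 : ℝ) < 1 / 2)]
    _ ≤ 1 / 2 * (L * T) * (M * (L * T) * (L * T + L * T))
        + 1 / 2 * (L * T) * (M * (L * T) * (L * T + 0)) + M * (L * T) * (L * T ^ 2) := by
        gcongr
        exacts [(hinc' s hs u hu).1, (hinc' u hu t ht).1, (hinc' u hu t ht).2.2]
    _ = _ := by ring

end Germ

theorem stmt_16 (α : ℝ) (hα : α ∈ Set.Ioo (1/3 : ℝ) 1)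
    (x y : ℝ → ℝ) (hx : HolderOnIcc α 0 2 x) (hy : HolderOnIcc α 0 2 y)
    (A : ℝ → ℝ → ℝ) (hA : IsLevyArea0 α x y A)
    (f : ℝ → ℝ) (hf : ContDiff ℝ 2 f) :
    ∃ (I : ℝ) (C : ℝ), 0 < C ∧
      (∀ ε ∈ Set.Ioc (0:ℝ) 1,
        |Ieps x y A f 0 1 ε - I| ≤ C * ε ^ min (3 * α - 1) α) ∧
      Filter.Tendsto (fun ε => Ieps x y A f 0 1 ε)
        (nhdsWithin 0 (Set.Ioi 0)) (nhds I) := by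
  have hα0 : 0 < α := by linarith [hα.1]
  have hθ : 0 < min (3 * α - 1) α := lt_min (by linarith [hα.1]) hα0
  have hxc := hx.continuousOn hα0
  have hyc := hy.continuousOn hα0
  have hAc := hA.continuousOn_uncurry hα0 hxc hyc
  have hf1 : ContDiff ℝ 1 f := hf.of_le (by norm_num)
  obtain ⟨K', hK', hΦ⟩ := exists_abs_symGerm_le hα0 hx hy hA hf1
  obtain ⟨K, hK, hδΦ⟩ := exists_abs_symGerm_sub_sub_le hα0 hx hy hA hf
  have hΦc := continuousOn_symGerm hxc hyc hAc hf1
  have hJ := almostAdditive_integral_shift (q := 1 + min (3 * α - 1) α) hΦc hΦ hδΦ hK hK' hα0.le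
    (by linarith [min_le_left (3 * α - 1) α]) (by linarith [min_le_right (3 * α - 1) α])
  have hJ0 := tendsto_nhdsGT_zero_of_abs_le_rpow hα0 fun η hη => by
    simpa using abs_integral_shift_le hΦ le_rfl zero_le_one hη.1.le hη.2 (by linarith [hη.2])
  obtain ⟨I, C, hC, hIC⟩ := hJ.exists_abs_inv_mul_sub_le hθ hJ0
  have hrate : ∀ ε ∈ Ioc (0 : ℝ) 1, |Ieps x y A f 0 1 ε - I| ≤ C * ε ^ min (3 * α - 1) α :=
    fun ε hε => by rw [Ieps_eq_inv_mul_integral_symGerm hxc hyc hAc hf1 hε]; exact hIC ε hε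
  exact ⟨I, C, hC, hrate, tendsto_sub_nhds_zero_iff.1 (tendsto_nhdsGT_zero_of_abs_le_rpow hθ hrate)⟩
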